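/- arXiv:math/0607360 — 2 statements merged into one kernel-verified Lean document; each statement's English description precedes it below -/
import Mathlib

section
/- In the local model, let a, b, c be real numbers with a·c − b² ≠ 0, let V = Σ_h V^h ∂/∂x^h be a smooth vector field on U, and let X^V = Σ_h V^h X_{h̄} be its vertical lift to TU. If X^V is conformal for the lift metric g̃ = a g₁ + b g₂ + c g₃ with factor Ω, i.e. L_{X^V} g̃ = 2 Ω g̃ for a smooth function Ω : TU → ℝ, then Ω = 0 identically; that is, X^V is a Killing vector field for g̃. -/
open scoped BigOperators

namespace TangentLift

/-- A point of the tangent bundle `TU = U × ℝⁿ` in coordinates `(x, y)`. -/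
abbrev Pt (n : ℕ) := (Fin n → ℝ) × (Fin n → ℝ)

variable {n : ℕ}

/-- Partial derivative `∂_i f` of a function on `ℝⁿ`. -/
noncomputable def pd (i : Fin n) (f : (Fin n → ℝ) → ℝ) (x : Fin n → ℝ) : ℝ :=
  fderiv ℝ f x (Pi.single i 1)

/-- The Christoffel symbols `Γ^k_{ij}` of a metric `g` given in coordinates. -/
noncomputable def Gam (g : (Fin n → ℝ) → Matrix (Fin n) (Fin n) ℝ)
    (k i j : Fin n) (x : Fin n → ℝ) : ℝ :=
  (1 / 2) * ∑ m, (g x)⁻¹ k m *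
    (pd i (fun z => g z m j) x + pd j (fun z => g z m i) x - pd m (fun z => g z i j) x)

/-- The curvature tensor `K_{ijk}{}^m` of the metric `g`. -/
noncomputable def Curv (g : (Fin n → ℝ) → Matrix (Fin n) (Fin n) ℝ)
    (i j k m : Fin n) (x : Fin n → ℝ) : ℝ :=
  pd i (Gam g m j k) x - pd j (Gam g m i k) x
    + ∑ a, (Gam g m i a x * Gam g a j k x - Gam g m j a x * Gam g a i k x)

/-- The horizontal adapted frame field `X_h(x,y) = ∂/∂x^h − Σ_{a,m} y^a Γ^m_{ah}(x) ∂/∂y^m`. -/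
noncomputable def XH (g : (Fin n → ℝ) → Matrix (Fin n) (Fin n) ℝ) (h : Fin n) (p : Pt n) :
    Pt n :=
  (Pi.single h 1, fun m => -∑ a, p.2 a * Gam g m a h p.1)

/-- The vertical adapted frame field `X_h̄(x,y) = ∂/∂y^h`. -/
noncomputable def XV (h : Fin n) (_p : Pt n) : Pt n := (0, Pi.single h 1)

/-- Lie bracket of vector fields on `U × ℝⁿ`: `[V,W](p) = DW(p)(V(p)) − DV(p)(W(p))`. -/
noncomputable def lie (V W : Pt n → Pt n) (p : Pt n) : Pt n :=
  fderiv ℝ W p (V p) - fderiv ℝ V p (W p)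

/-- Directional derivative of a function on `TU` along the vector field `Z`. -/
noncomputable def dirD (Z : Pt n → Pt n) (f : Pt n → ℝ) (p : Pt n) : ℝ :=
  fderiv ℝ f p (Z p)

/-- The vertical components of a tangent vector `v` at `p` in the adapted frame,
i.e. the coefficients of the `X_m̄` in the expansion of `v`. -/
noncomputable def ver (g : (Fin n → ℝ) → Matrix (Fin n) (Fin n) ℝ) (p : Pt n) (v : Pt n) :
    Fin n → ℝ :=
  fun m => v.2 m + ∑ a, ∑ i, p.2 a * Gam g m a i p.1 * v.1 i

/-- The bilinear-form field `g₁` on `TU`: `g₁(X_i,X_j) = g_{ij}`, vanishing on vertical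
arguments. -/
noncomputable def g1 (g : (Fin n → ℝ) → Matrix (Fin n) (Fin n) ℝ) (p : Pt n) (v w : Pt n) : ℝ :=
  ∑ i, ∑ j, g p.1 i j * v.1 i * w.1 j

/-- The bilinear-form field `g₂` on `TU`: `g₂(X_i,X_j̄) = g₂(X_j̄,X_i) = g_{ij}`, vanishing on
two horizontal or two vertical arguments. -/
noncomputable def g2 (g : (Fin n → ℝ) → Matrix (Fin n) (Fin n) ℝ) (p : Pt n) (v w : Pt n) : ℝ :=
  ∑ i, ∑ j, g p.1 i j * (v.1 i * ver g p w j + w.1 i * ver g p v j)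

/-- The bilinear-form field `g₃` on `TU`: `g₃(X_ī,X_j̄) = g_{ij}`, vanishing on horizontal
arguments. -/
noncomputable def g3 (g : (Fin n → ℝ) → Matrix (Fin n) (Fin n) ℝ) (p : Pt n) (v w : Pt n) : ℝ :=
  ∑ i, ∑ j, g p.1 i j * ver g p v i * ver g p w j

/-- The lift metric `g̃ = a g₁ + b g₂ + c g₃` on `TU`. -/
noncomputable def gLift (g : (Fin n → ℝ) → Matrix (Fin n) (Fin n) ℝ) (a b c : ℝ)
    (p : Pt n) (v w : Pt n) : ℝ :=
  a * g1 g p v w + b * g2 g p v w + c * g3 g p v w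

/-- Lie derivative of a field `S` of bilinear forms along the vector field `X`, evaluated on
the vector fields `V`, `W` at the point `p`:
`(L_X S)(V,W) = X·(S(V,W)) − S([X,V],W) − S(V,[X,W])`. -/
noncomputable def lieDer (X : Pt n → Pt n) (S : Pt n → Pt n → Pt n → ℝ)
    (V W : Pt n → Pt n) (p : Pt n) : ℝ :=
  dirD X (fun q => S q (V q) (W q)) p - S p (lie X V p) (W p) - S p (V p) (lie X W p)

/-- `g` is a Riemannian metric on `U` given in coordinates: each component is smooth on `U`,
and at each point of `U` the matrix `(g_{ij})` is symmetric positive definite. -/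
def IsMetric (U : Set (Fin n → ℝ)) (g : (Fin n → ℝ) → Matrix (Fin n) (Fin n) ℝ) : Prop :=
  (∀ i j, ContDiffOn ℝ (⊤ : ℕ∞) (fun x => g x i j) U) ∧
    (∀ x ∈ U, (g x).IsSymm) ∧ (∀ x ∈ U, (g x).PosDef)

/-- The vector field `X = Σ_h X^h X_h + Σ_h X^h̄ X_h̄` on `TU` with the given components in
the adapted frame; for a fiber-preserving field the `X^h` are functions of `x` alone. -/
noncomputable def mkVF (g : (Fin n → ℝ) → Matrix (Fin n) (Fin n) ℝ)
    (Xh' : Fin n → (Fin n → ℝ) → ℝ) (Xv' : Fin n → Pt n → ℝ) (p : Pt n) : Pt n :=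
  (∑ h, Xh' h p.1 • XH g h p) + ∑ h, Xv' h p • XV h p

/-- Smoothness of the components of a fiber-preserving vector field on `TU`. -/
def SmoothComponents (U : Set (Fin n → ℝ)) (Xh' : Fin n → (Fin n → ℝ) → ℝ)
    (Xv' : Fin n → Pt n → ℝ) : Prop :=
  (∀ h, ContDiffOn ℝ (⊤ : ℕ∞) (Xh' h) U) ∧ (∀ h, ContDiffOn ℝ (⊤ : ℕ∞) (Xv' h) (U ×ˢ Set.univ))

/-- `X` is a conformal vector field for the lift metric `g̃ = a g₁ + b g₂ + c g₃` with
conformal factor `Ω`, i.e. `L_X g̃ = 2 Ω g̃` as fields of bilinear forms on `TU`, tested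
against all smooth vector fields on `TU`. -/
def Conformal (U : Set (Fin n → ℝ)) (g : (Fin n → ℝ) → Matrix (Fin n) (Fin n) ℝ)
    (a b c : ℝ) (X : Pt n → Pt n) (Ω : Pt n → ℝ) : Prop :=
  ∀ V W : Pt n → Pt n, ContDiffOn ℝ (⊤ : ℕ∞) V (U ×ˢ Set.univ) → ContDiffOn ℝ (⊤ : ℕ∞) W (U ×ˢ Set.univ) →
    ∀ p : Pt n, p.1 ∈ U →
      lieDer X (gLift g a b c) V W p = 2 * Ω p * gLift g a b c p (V p) (W p)

/-- The components `(L_V g)_{ij}` of the Lie derivative of `g` along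
`V = Σ_h V^h ∂/∂x^h` on `U`. -/
noncomputable def lieG (g : (Fin n → ℝ) → Matrix (Fin n) (Fin n) ℝ)
    (Vf : Fin n → (Fin n → ℝ) → ℝ) (i j : Fin n) (x : Fin n → ℝ) : ℝ :=
  ∑ a, (Vf a x * pd a (fun z => g z i j) x + pd i (Vf a) x * g x a j + pd j (Vf a) x * g x i a)

/-- The covariant derivative `∇_i V^m = ∂_i V^m + Σ_a Γ^m_{ia} V^a`. -/
noncomputable def covD (g : (Fin n → ℝ) → Matrix (Fin n) (Fin n) ℝ)
    (Vf : Fin n → (Fin n → ℝ) → ℝ) (i m : Fin n) (x : Fin n → ℝ) : ℝ :=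
  pd i (Vf m) x + ∑ a, Gam g m i a x * Vf a x

/-- The complete lift `X^C = Σ_h V^h X_h + Σ_{h,m} y^m (Σ_a Γ^h_{ma} V^a + ∂_m V^h) X_h̄`
of the vector field `V = Σ_h V^h ∂/∂x^h` on `U`. -/
noncomputable def completeLift (g : (Fin n → ℝ) → Matrix (Fin n) (Fin n) ℝ)
    (Vf : Fin n → (Fin n → ℝ) → ℝ) (p : Pt n) : Pt n :=
  (∑ h, Vf h p.1 • XH g h p)
    + ∑ h, (∑ m, p.2 m * ((∑ a, Gam g h m a p.1 * Vf a p.1) + pd m (Vf h) p.1)) • XV h p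

/-- The vertical lift `X^V = Σ_h V^h X_h̄` of `V = Σ_h V^h ∂/∂x^h`. -/
noncomputable def vertLift (Vf : Fin n → (Fin n → ℝ) → ℝ) (p : Pt n) : Pt n :=
  ∑ h, Vf h p.1 • XV h p

/-- The horizontal lift `X^H = Σ_h V^h X_h` of `V = Σ_h V^h ∂/∂x^h`. -/
noncomputable def horLift (g : (Fin n → ℝ) → Matrix (Fin n) (Fin n) ℝ)
    (Vf : Fin n → (Fin n → ℝ) → ℝ) (p : Pt n) : Pt n :=
  ∑ h, Vf h p.1 • XH g h p


/-! ### Auxiliary lemmas -/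

section Aux

variable {n : ℕ}

lemma vertLift_eq (Vf : Fin n → (Fin n → ℝ) → ℝ) (p : Pt n) :
    vertLift Vf p = ((0 : Fin n → ℝ), fun m => Vf m p.1) := by
  unfold vertLift XV
  refine Prod.ext ?_ ?_
  · simp [Prod.fst_sum]
  · funext m
    simp [Prod.snd_sum, Finset.sum_apply, Pi.single_apply]

lemma ver_vert (g : (Fin n → ℝ) → Matrix (Fin n) (Fin n) ℝ) (p : Pt n) (w : Fin n → ℝ) :
    ver g p ((0 : Fin n → ℝ), w) = w := by
  funext m; simp [ver]

lemma gLift_vv (g : (Fin n → ℝ) → Matrix (Fin n) (Fin n) ℝ) (a b c : ℝ) (p : Pt n)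
    (i j : Fin n) :
    gLift g a b c p ((0 : Fin n → ℝ), Pi.single i 1) ((0 : Fin n → ℝ), Pi.single j 1)
      = c * g p.1 i j := by
  simp [gLift, g1, g2, g3, ver_vert, Pi.single_apply, mul_ite, Finset.mul_sum]

lemma gLift_zero_left (g : (Fin n → ℝ) → Matrix (Fin n) (Fin n) ℝ) (a b c : ℝ) (p : Pt n)
    (w : Pt n) : gLift g a b c p 0 w = 0 := by
  simp [gLift, g1, g2, g3, ver]

lemma gLift_zero_right (g : (Fin n → ℝ) → Matrix (Fin n) (Fin n) ℝ) (a b c : ℝ) (p : Pt n)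
    (v : Pt n) : gLift g a b c p v 0 = 0 := by
  simp [gLift, g1, g2, g3, ver]

lemma gLift_vh_c0 (g : (Fin n → ℝ) → Matrix (Fin n) (Fin n) ℝ) (a b : ℝ) (p : Pt n)
    (i j : Fin n) :
    gLift g a b 0 p ((0 : Fin n → ℝ), Pi.single i 1) (Pi.single j 1, (0 : Fin n → ℝ))
      = b * g p.1 j i := by
  simp [gLift, g1, g2, g3, ver_vert, ver, Pi.single_apply, mul_ite, Finset.mul_sum,
    mul_add, Finset.sum_add_distrib]

lemma gLift_vv0 (g : (Fin n → ℝ) → Matrix (Fin n) (Fin n) ℝ) (a b : ℝ) (p : Pt n)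
    (v w : Fin n → ℝ) :
    gLift g a b 0 p ((0 : Fin n → ℝ), v) ((0 : Fin n → ℝ), w) = 0 := by
  simp [gLift, g1, g2, g3, ver_vert]

lemma vertLift_hasFDerivAt (U : Set (Fin n → ℝ)) (hU : IsOpen U)
    (Vf : Fin n → (Fin n → ℝ) → ℝ) (hVf : ∀ h, ContDiffOn ℝ (⊤ : ℕ∞) (Vf h) U)
    (p : Pt n) (hp : p.1 ∈ U) :
    HasFDerivAt (vertLift Vf)
      ((((0 : (Fin n → ℝ) →L[ℝ] (Fin n → ℝ))).prod
          (fderiv ℝ (fun x (m : Fin n) => Vf m x) p.1)).comp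
        (ContinuousLinearMap.fst ℝ (Fin n → ℝ) (Fin n → ℝ))) p := by
  have hH : DifferentiableAt ℝ (fun x (m : Fin n) => Vf m x) p.1 :=
    differentiableAt_pi.2 fun m =>
      ((hVf m).differentiableOn (by simp)).differentiableAt (hU.mem_nhds hp)
  have h1 : HasFDerivAt (fun q : Pt n => ((0 : Fin n → ℝ), fun m => Vf m q.1))
      ((((0 : (Fin n → ℝ) →L[ℝ] (Fin n → ℝ))).prod
          (fderiv ℝ (fun x (m : Fin n) => Vf m x) p.1)).comp
        (ContinuousLinearMap.fst ℝ (Fin n → ℝ) (Fin n → ℝ))) p :=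
    (HasFDerivAt.prodMk (hasFDerivAt_const (0 : Fin n → ℝ) p.1) hH.hasFDerivAt).comp p hasFDerivAt_fst
  have heq : vertLift Vf = fun q : Pt n => ((0 : Fin n → ℝ), fun m => Vf m q.1) :=
    funext fun q => vertLift_eq Vf q
  rw [heq]
  exact h1

lemma lie_vertLift_const (U : Set (Fin n → ℝ)) (hU : IsOpen U)
    (Vf : Fin n → (Fin n → ℝ) → ℝ) (hVf : ∀ h, ContDiffOn ℝ (⊤ : ℕ∞) (Vf h) U)
    (p : Pt n) (hp : p.1 ∈ U) (v : Pt n) :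
    lie (vertLift Vf) (fun _ => v) p
      = ((0 : Fin n → ℝ), -(fderiv ℝ (fun x (m : Fin n) => Vf m x) p.1 v.1)) := by
  unfold lie
  rw [(vertLift_hasFDerivAt U hU Vf hVf p hp).fderiv]
  have hc : fderiv ℝ (fun _ : Pt n => v) p = 0 := fderiv_const_apply v
  rw [hc]
  refine Prod.ext ?_ ?_ <;> simp

lemma dirD_vertLift_base (Vf : Fin n → (Fin n → ℝ) → ℝ) (p : Pt n)
    (f : (Fin n → ℝ) → ℝ) (hf : DifferentiableAt ℝ f p.1) :
    dirD (vertLift Vf) (fun q : Pt n => f q.1) p = 0 := by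
  unfold dirD
  have h : HasFDerivAt (fun q : Pt n => f q.1)
      ((fderiv ℝ f p.1).comp (ContinuousLinearMap.fst ℝ (Fin n → ℝ) (Fin n → ℝ))) p :=
    hf.hasFDerivAt.comp p hasFDerivAt_fst
  rw [h.fderiv, vertLift_eq]
  simp

lemma diag_pos_of_posDef {M : Matrix (Fin n) (Fin n) ℝ} (h : M.PosDef) (j : Fin n) :
    0 < M j j := by
  have := h.dotProduct_mulVec_pos (x := Pi.single j 1) (by
    intro hz
    have := congrFun hz j
    simp at this)
  simpa [Matrix.mulVec, dotProduct, Pi.single_apply] using this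

end Aux

/-- If the vertical lift `X^V = Σ_h V^h X_h̄` of a smooth vector field `V`
on `U` is conformal for the lift metric `g̃ = a g₁ + b g₂ + c g₃` (with `a·c − b² ≠ 0`) with
factor `Ω`, then `Ω = 0`: `X^V` is a Killing vector field for `g̃`. -/
theorem vertLift_conformal_is_Killing (n : ℕ) (hn : 1 ≤ n) (U : Set (Fin n → ℝ))
    (hU : IsOpen U) (g : (Fin n → ℝ) → Matrix (Fin n) (Fin n) ℝ) (hg : IsMetric U g)
    (a b c : ℝ) (habc : a * c - b ^ 2 ≠ 0)
    (Vf : Fin n → (Fin n → ℝ) → ℝ) (hVf : ∀ h, ContDiffOn ℝ (⊤ : ℕ∞) (Vf h) U)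
    (Ω : Pt n → ℝ) (hΩ : ContDiffOn ℝ (⊤ : ℕ∞) Ω (U ×ˢ Set.univ))
    (hconf : Conformal U g a b c (vertLift Vf) Ω) :
    ∀ p : Pt n, p.1 ∈ U → Ω p = 0 := by
  intro p hp
  have hn0 : 0 < n := hn
  set j : Fin n := ⟨0, hn0⟩ with hj
  have hgj : 0 < g p.1 j j := diag_pos_of_posDef (hg.2.2 p.1 hp) j
  have hgdiff : DifferentiableAt ℝ (fun x => g x j j) p.1 :=
    ((hg.1 j j).differentiableOn (by simp)).differentiableAt (hU.mem_nhds hp)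
  have hXVconst : ∀ i : Fin n, XV (n := n) i = fun _ => ((0 : Fin n → ℝ), Pi.single i 1) :=
    fun i => rfl
  have hlieXV : lie (vertLift Vf) (XV j) p = 0 := by
    rw [hXVconst j, lie_vertLift_const U hU Vf hVf p hp]
    refine Prod.ext ?_ ?_ <;> simp
  by_cases hc : c = 0
  · -- c = 0, so b ≠ 0
    subst hc
    have hb : b ≠ 0 := by
      intro h0
      apply habc
      rw [h0]; ring
    have e2 := hconf (XV j) (fun _ : Pt n => ((Pi.single j 1 : Fin n → ℝ), (0 : Fin n → ℝ)))
      (by rw [hXVconst j]; exact contDiffOn_const) contDiffOn_const p hp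
    unfold lieDer at e2
    have hfun : (fun q : Pt n => gLift g a b 0 q (XV j q)
        ((fun _ : Pt n => ((Pi.single j 1 : Fin n → ℝ), (0 : Fin n → ℝ))) q))
        = fun q : Pt n => b * g q.1 j j := by
      funext q
      exact gLift_vh_c0 g a b q j j
    rw [hfun] at e2
    have hdir : dirD (vertLift Vf) (fun q : Pt n => b * g q.1 j j) p = 0 :=
      dirD_vertLift_base Vf p (fun x => b * g x j j) (hgdiff.const_mul b)
    have hlieW := lie_vertLift_const U hU Vf hVf p hp ((Pi.single j 1 : Fin n → ℝ), (0 : Fin n → ℝ))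
    rw [hdir, hlieXV, gLift_zero_left, hlieW] at e2
    have hXVp : XV (n := n) j p = ((0 : Fin n → ℝ), Pi.single j 1) := rfl
    rw [hXVp, gLift_vv0, gLift_vh_c0] at e2
    have h2 : Ω p * (2 * (b * g p.1 j j)) = 0 := by linarith [e2]
    rcases mul_eq_zero.1 h2 with h | h
    · exact h
    · exfalso
      have : b * g p.1 j j ≠ 0 := mul_ne_zero hb (ne_of_gt hgj)
      have h4 : (2 : ℝ) * (b * g p.1 j j) ≠ 0 := mul_ne_zero two_ne_zero this
      exact h4 h
  · -- c ≠ 0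
    have e1 := hconf (XV j) (XV j)
      (by rw [hXVconst j]; exact contDiffOn_const)
      (by rw [hXVconst j]; exact contDiffOn_const) p hp
    unfold lieDer at e1
    have hfun : (fun q : Pt n => gLift g a b c q (XV j q) (XV j q))
        = fun q : Pt n => c * g q.1 j j := by
      funext q
      exact gLift_vv g a b c q j j
    rw [hfun] at e1
    have hdir : dirD (vertLift Vf) (fun q : Pt n => c * g q.1 j j) p = 0 :=
      dirD_vertLift_base Vf p (fun x => c * g x j j) (hgdiff.const_mul c)
    rw [hdir, hlieXV, gLift_zero_left, gLift_zero_right] at e1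
    have hXVp : XV (n := n) j p = ((0 : Fin n → ℝ), Pi.single j 1) := rfl
    rw [hXVp, gLift_vv] at e1
    have h2 : Ω p * (2 * (c * g p.1 j j)) = 0 := by linarith [e1]
    rcases mul_eq_zero.1 h2 with h | h
    · exact h
    · exfalso
      have : c * g p.1 j j ≠ 0 := mul_ne_zero hc (ne_of_gt hgj)
      have h4 : (2 : ℝ) * (c * g p.1 j j) ≠ 0 := mul_ne_zero two_ne_zero this
      exact h4 h

end TangentLift
end

section
/- In the local model, let a, b, c be real numbers with a·c − b² ≠ 0, and let X = Σ_h X^h X_h + Σ_h X^{h̄} X_{h̄} be a fiber-preserving vector field on TU that is conformal for the lift metric g̃ = a g₁ + b g₂ + c g₃ with factor Ω, where Ω depends only on the position variables x (X is inessential). Then ∂²X^{m̄}/∂y^i ∂y^j = 0 for all indices m, i, j; equivalently, there exist smooth functions α^m_a and β^m on U such that X^{m̄}(x,y) = Σ_a α^m_a(x) y^a + β^m(x). -/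
open scoped BigOperators

namespace TangentLift

variable {n : ℕ}

-- ## Smoothness infrastructure

lemma contDiffOn_det_aux {U : Set (Fin n → ℝ)} {M : (Fin n → ℝ) → Matrix (Fin n) (Fin n) ℝ}
    (h : ∀ i j, ContDiffOn ℝ (⊤ : ℕ∞) (fun x => M x i j) U) :
    ContDiffOn ℝ (⊤ : ℕ∞) (fun x => (M x).det) U := by
  simp_rw [Matrix.det_apply]
  apply ContDiffOn.sum; intro σ _
  have e : ∀ x : Fin n → ℝ, (Equiv.Perm.sign σ • ∏ i, M x (σ i) i : ℝ)
      = ((Equiv.Perm.sign σ : ℤ) : ℝ) * ∏ i, M x (σ i) i := by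
    intro x; rw [Units.smul_def, zsmul_eq_mul]
  simp_rw [e]
  exact contDiffOn_const.mul (contDiffOn_prod fun i _ => h (σ i) i)

lemma contDiffOn_pd {U : Set (Fin n → ℝ)} (hU : IsOpen U) {f : (Fin n → ℝ) → ℝ}
    (hf : ContDiffOn ℝ (⊤ : ℕ∞) f U) (i : Fin n) : ContDiffOn ℝ (⊤ : ℕ∞) (pd i f) U :=
  (hf.fderiv_of_isOpen hU (by simp)).clm_apply contDiffOn_const

lemma contDiffOn_inv_entry {U : Set (Fin n → ℝ)} (hU : IsOpen U)
    {g : (Fin n → ℝ) → Matrix (Fin n) (Fin n) ℝ} (hg : IsMetric U g) (k m : Fin n) :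
    ContDiffOn ℝ (⊤ : ℕ∞) (fun x => (g x)⁻¹ k m) U := by
  have hdet : ContDiffOn ℝ (⊤ : ℕ∞) (fun x => (g x).det) U := contDiffOn_det_aux hg.1
  have hdet0 : ∀ x ∈ U, (g x).det ≠ 0 := fun x hx => ((hg.2.2 x hx).det_pos).ne'
  have hadj : ContDiffOn ℝ (⊤ : ℕ∞) (fun x => (g x).adjugate k m) U := by
    simp_rw [Matrix.adjugate_apply]
    apply contDiffOn_det_aux
    intro i j
    simp_rw [Matrix.updateRow_apply]
    by_cases hij : i = m
    · simp only [hij, if_pos]; exact contDiffOn_const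
    · simp only [hij, if_false]; exact hg.1 i j
  have : ∀ x, (g x)⁻¹ k m = ((g x).det)⁻¹ * (g x).adjugate k m := by
    intro x
    rw [Matrix.inv_def, Matrix.smul_apply, Ring.inverse_eq_inv', smul_eq_mul]
  simp_rw [this]
  exact (hdet.inv hdet0).mul hadj

lemma contDiffOn_Gam {U : Set (Fin n → ℝ)} (hU : IsOpen U)
    {g : (Fin n → ℝ) → Matrix (Fin n) (Fin n) ℝ} (hg : IsMetric U g) (k i j : Fin n) :
    ContDiffOn ℝ (⊤ : ℕ∞) (Gam g k i j) U := by
  unfold Gam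
  refine contDiffOn_const.mul (ContDiffOn.sum fun m _ => ?_)
  exact (contDiffOn_inv_entry hU hg k m).mul
    (((contDiffOn_pd hU (hg.1 m j) i).add (contDiffOn_pd hU (hg.1 m i) j)).sub
      (contDiffOn_pd hU (hg.1 i j) m))




-- ## Pointwise frame computations

lemma ver_pair (g : (Fin n → ℝ) → Matrix (Fin n) (Fin n) ℝ) (q : Pt n) (w : Fin n → ℝ) :
    ver g q ((0 : Fin n → ℝ), w) = w := by
  funext m; simp [ver]

lemma ver_XV (g : (Fin n → ℝ) → Matrix (Fin n) (Fin n) ℝ) (q : Pt n) (j : Fin n) :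
    ver g q (XV j q) = Pi.single j 1 := by
  funext m; simp [ver, XV]

lemma ver_XH (g : (Fin n → ℝ) → Matrix (Fin n) (Fin n) ℝ) (q : Pt n) (j : Fin n) :
    ver g q (XH g j q) = 0 := by
  funext m
  simp [ver, XH, Pi.single_apply, mul_ite, Finset.sum_ite_eq, Finset.sum_ite_eq']

lemma gLift_XV_XV (g : (Fin n → ℝ) → Matrix (Fin n) (Fin n) ℝ) (a b c : ℝ) (p : Pt n)
    (i j : Fin n) : gLift g a b c p (XV i p) (XV j p) = c * g p.1 i j := by
  simp [gLift, g1, g2, g3, ver_XV, ver_pair, XV, Pi.single_apply, mul_ite, ite_mul,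
    Finset.sum_ite_eq, Finset.sum_ite_eq']

lemma gLift_vert_XV (g : (Fin n → ℝ) → Matrix (Fin n) (Fin n) ℝ) (a b c : ℝ) (p : Pt n)
    (w : Fin n → ℝ) (j : Fin n) :
    gLift g a b c p ((0 : Fin n → ℝ), w) (XV j p) = c * ∑ m, g p.1 m j * w m := by
  simp [gLift, g1, g2, g3, ver_XV, ver_pair, XV, Pi.single_apply, mul_ite, ite_mul,
    Finset.sum_ite_eq, Finset.sum_ite_eq', Finset.mul_sum, mul_comm, mul_left_comm]

lemma gLift_vert_XH (g : (Fin n → ℝ) → Matrix (Fin n) (Fin n) ℝ) (a b : ℝ) (p : Pt n)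
    (w : Fin n → ℝ) (j : Fin n) :
    gLift g a b 0 p ((0 : Fin n → ℝ), w) (XH g j p) = b * ∑ m, g p.1 j m * w m := by
  have h1 : (XH g j p).1 = Pi.single j 1 := rfl
  simp [gLift, g1, g2, g3, ver_XH, ver_pair, h1, Pi.single_apply, mul_ite, ite_mul,
    Finset.sum_ite_eq, Finset.sum_ite_eq', Finset.mul_sum, mul_comm, mul_left_comm]

lemma gLift_XV_any (g : (Fin n → ℝ) → Matrix (Fin n) (Fin n) ℝ) (a b : ℝ) (p : Pt n)
    (i : Fin n) (w : Pt n) :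
    gLift g a b 0 p (XV i p) w = b * ∑ m, g p.1 m i * w.1 m := by
  simp [gLift, g1, g2, g3, ver_XV, ver_pair, XV, Pi.single_apply, mul_ite, ite_mul,
    Finset.sum_ite_eq, Finset.sum_ite_eq', Finset.mul_sum, mul_comm, mul_left_comm]

lemma gLift_XV_XH (g : (Fin n → ℝ) → Matrix (Fin n) (Fin n) ℝ) (a b : ℝ) (p : Pt n)
    (i j : Fin n) : gLift g a b 0 p (XV i p) (XH g j p) = b * g p.1 j i := by
  rw [gLift_XV_any]
  have h1 : (XH g j p).1 = Pi.single j 1 := rfl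
  simp [h1, Pi.single_apply, mul_ite, Finset.sum_ite_eq, Finset.sum_ite_eq']



-- ## Derivative atoms

lemma diffAt_of_mem {U : Set (Fin n → ℝ)} (hU : IsOpen U) {f : (Fin n → ℝ) → ℝ}
    (hf : ContDiffOn ℝ (⊤ : ℕ∞) f U) {x : Fin n → ℝ} (hx : x ∈ U) : DifferentiableAt ℝ f x :=
  (hf.contDiffAt (hU.mem_nhds hx)).differentiableAt (by simp)

lemma mem_prod_univ {U : Set (Fin n → ℝ)} {p : Pt n} (hp : p.1 ∈ U) :
    p ∈ U ×ˢ (Set.univ : Set (Fin n → ℝ)) := Set.mem_prod.2 ⟨hp, trivial⟩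

lemma diffAt_of_mem_prod {U : Set (Fin n → ℝ)} (hU : IsOpen U) {f : Pt n → ℝ}
    (hf : ContDiffOn ℝ (⊤ : ℕ∞) f (U ×ˢ Set.univ)) {p : Pt n} (hp : p.1 ∈ U) :
    DifferentiableAt ℝ f p :=
  (hf.contDiffAt (((hU.prod isOpen_univ)).mem_nhds (mem_prod_univ hp))).differentiableAt (by simp)

lemma hasFDerivAt_comp_fst {F : (Fin n → ℝ) → ℝ} {p : Pt n} (hF : DifferentiableAt ℝ F p.1) :
    HasFDerivAt (fun q : Pt n => F q.1)
      ((fderiv ℝ F p.1).comp (ContinuousLinearMap.fst ℝ (Fin n → ℝ) (Fin n → ℝ))) p :=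
  hF.hasFDerivAt.comp p hasFDerivAt_fst

lemma fderiv_comp_fst_apply {F : (Fin n → ℝ) → ℝ} {p : Pt n} (hF : DifferentiableAt ℝ F p.1)
    (v : Pt n) : fderiv ℝ (fun q : Pt n => F q.1) p v = fderiv ℝ F p.1 v.1 := by
  rw [(hasFDerivAt_comp_fst hF).fderiv]; rfl

lemma hasFDerivAt_snd_apply (a : Fin n) (p : Pt n) :
    HasFDerivAt (fun q : Pt n => q.2 a)
      ((ContinuousLinearMap.proj a).comp (ContinuousLinearMap.snd ℝ (Fin n → ℝ) (Fin n → ℝ)))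
      p :=
  (ContinuousLinearMap.proj (R := ℝ) (φ := fun _ : Fin n => ℝ) a).hasFDerivAt.comp p
    hasFDerivAt_snd

lemma fderiv_prod_pi_apply {F1 F2 : Pt n → Fin n → ℝ} {p : Pt n} (v : Pt n)
    (h1 : ∀ i, DifferentiableAt ℝ (fun q => F1 q i) p)
    (h2 : ∀ i, DifferentiableAt ℝ (fun q => F2 q i) p) :
    fderiv ℝ (fun q : Pt n => ((F1 q, F2 q) : Pt n)) p v
      = (fun i => fderiv ℝ (fun q => F1 q i) p v, fun i => fderiv ℝ (fun q => F2 q i) p v) := by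
  have d1 : DifferentiableAt ℝ F1 p := differentiableAt_pi.2 h1
  have d2 : DifferentiableAt ℝ F2 p := differentiableAt_pi.2 h2
  have e1 : fderiv ℝ F1 p = ContinuousLinearMap.pi fun i => fderiv ℝ (fun q => F1 q i) p :=
    fderiv_pi h1
  have e2 : fderiv ℝ F2 p = ContinuousLinearMap.pi fun i => fderiv ℝ (fun q => F2 q i) p :=
    fderiv_pi h2
  rw [DifferentiableAt.fderiv_prodMk d1 d2, ContinuousLinearMap.prod_apply, e1, e2]
  rfl

-- ## The vector field in plain coordinates

noncomputable def X2 (g : (Fin n → ℝ) → Matrix (Fin n) (Fin n) ℝ)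
    (Xh' : Fin n → (Fin n → ℝ) → ℝ) (Xv' : Fin n → Pt n → ℝ) (m : Fin n) (q : Pt n) : ℝ :=
  (∑ h, Xh' h q.1 * (-(∑ a, q.2 a * Gam g m a h q.1))) + Xv' m q

lemma mkVF_eq (g : (Fin n → ℝ) → Matrix (Fin n) (Fin n) ℝ)
    (Xh' : Fin n → (Fin n → ℝ) → ℝ) (Xv' : Fin n → Pt n → ℝ) :
    mkVF g Xh' Xv' = fun q : Pt n =>
      (((fun h' => Xh' h' q.1) : Fin n → ℝ),
        ((fun m => X2 g Xh' Xv' m q) : Fin n → ℝ)) := by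
  funext q
  refine Prod.ext ?_ ?_
  · show (_ + _ : Pt n).1 = _
    rw [Prod.fst_add, Prod.fst_sum, Prod.fst_sum]
    funext h'
    simp [XH, XV, X2, Pi.single_apply, mul_ite, Finset.sum_ite_eq, Finset.sum_ite_eq']
  · show (_ + _ : Pt n).2 = _
    rw [Prod.snd_add, Prod.snd_sum, Prod.snd_sum]
    funext m
    simp [XH, XV, X2, Pi.single_apply, mul_ite, Finset.sum_ite_eq, Finset.sum_ite_eq']

section Derivs

variable {U : Set (Fin n → ℝ)} (hU : IsOpen U)
  {g : (Fin n → ℝ) → Matrix (Fin n) (Fin n) ℝ} (hg : IsMetric U g)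
  {Xh' : Fin n → (Fin n → ℝ) → ℝ} {Xv' : Fin n → Pt n → ℝ}
  (hX : SmoothComponents U Xh' Xv') {p : Pt n} (hp : p.1 ∈ U)

include hU hg hX hp

lemma diffAt_X2 (m : Fin n) : DifferentiableAt ℝ (X2 g Xh' Xv' m) p := by
  have hXvd : DifferentiableAt ℝ (Xv' m) p := diffAt_of_mem_prod hU (hX.2 m) hp
  have hmain := HasFDerivAt.fun_add
    (HasFDerivAt.fun_sum (u := Finset.univ) (fun h _ =>
      HasFDerivAt.fun_mul (hasFDerivAt_comp_fst (diffAt_of_mem hU (hX.1 h) hp))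
        (HasFDerivAt.fun_neg (HasFDerivAt.fun_sum (u := Finset.univ) (fun a _ =>
          HasFDerivAt.fun_mul (hasFDerivAt_snd_apply a p)
            (hasFDerivAt_comp_fst (diffAt_of_mem hU (contDiffOn_Gam hU hg m a h) hp)))))))
    hXvd.hasFDerivAt
  exact hmain.differentiableAt

lemma fderiv_X2_vert (m i : Fin n) :
    fderiv ℝ (X2 g Xh' Xv' m) p ((0 : Fin n → ℝ), Pi.single i 1)
      = -(∑ h, Xh' h p.1 * Gam g m i h p.1)
        + fderiv ℝ (Xv' m) p ((0 : Fin n → ℝ), Pi.single i 1) := by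
  have hXvd : DifferentiableAt ℝ (Xv' m) p := diffAt_of_mem_prod hU (hX.2 m) hp
  have hmain := HasFDerivAt.fun_add
    (HasFDerivAt.fun_sum (u := Finset.univ) (fun h _ =>
      HasFDerivAt.fun_mul (hasFDerivAt_comp_fst (diffAt_of_mem hU (hX.1 h) hp))
        (HasFDerivAt.fun_neg (HasFDerivAt.fun_sum (u := Finset.univ) (fun a _ =>
          HasFDerivAt.fun_mul (hasFDerivAt_snd_apply a p)
            (hasFDerivAt_comp_fst (diffAt_of_mem hU (contDiffOn_Gam hU hg m a h) hp)))))))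
    hXvd.hasFDerivAt
  have h2 := (show HasFDerivAt (X2 g Xh' Xv' m) _ p from hmain).fderiv
  rw [h2]
  simp only [ContinuousLinearMap.add_apply, ContinuousLinearMap.coe_sum',
    Finset.sum_apply, ContinuousLinearMap.add_apply, ContinuousLinearMap.smul_apply,
    ContinuousLinearMap.neg_apply, ContinuousLinearMap.coe_comp', Function.comp_apply,
    ContinuousLinearMap.coe_fst', ContinuousLinearMap.coe_snd',
    ContinuousLinearMap.proj_apply, smul_eq_mul, map_zero, mul_zero, zero_mul, add_zero,
    zero_add, Pi.single_apply, mul_ite, ite_mul, mul_one, one_mul,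
    Finset.sum_ite_eq, Finset.sum_ite_eq']
  rw [← Finset.sum_neg_distrib]
  refine congrArg₂ (· + ·) (Finset.sum_congr rfl fun h _ => ?_) rfl
  simp

end Derivs


lemma gLift_XV_vert (g : (Fin n → ℝ) → Matrix (Fin n) (Fin n) ℝ) (a b c : ℝ) (p : Pt n)
    (i : Fin n) (w : Fin n → ℝ) :
    gLift g a b c p (XV i p) ((0 : Fin n → ℝ), w) = c * ∑ m, g p.1 i m * w m := by
  simp [gLift, g1, g2, g3, ver_XV, ver_pair, XV, Pi.single_apply, mul_ite, ite_mul,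
    Finset.sum_ite_eq, Finset.sum_ite_eq', Finset.mul_sum, mul_comm, mul_left_comm]

section Derivs2

variable {U : Set (Fin n → ℝ)} (hU : IsOpen U)
  {g : (Fin n → ℝ) → Matrix (Fin n) (Fin n) ℝ} (hg : IsMetric U g)
  {Xh' : Fin n → (Fin n → ℝ) → ℝ} {Xv' : Fin n → Pt n → ℝ}
  (hX : SmoothComponents U Xh' Xv') {p : Pt n} (hp : p.1 ∈ U)

include hU hg hX hp

lemma fderiv_mkVF_apply (v : Pt n) :
    fderiv ℝ (mkVF g Xh' Xv') p v
      = (fun h' => fderiv ℝ (Xh' h') p.1 v.1,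
         fun m => fderiv ℝ (X2 g Xh' Xv' m) p v) := by
  rw [mkVF_eq, fderiv_prod_pi_apply v
    (fun h' => (hasFDerivAt_comp_fst (diffAt_of_mem hU (hX.1 h') hp)).differentiableAt)
    (fun m => diffAt_X2 hU hg hX hp m)]
  refine Prod.ext ?_ rfl
  funext h'
  exact fderiv_comp_fst_apply (diffAt_of_mem hU (hX.1 h') hp) v

lemma lie_XV (i : Fin n) :
    lie (mkVF g Xh' Xv') (XV i) p
      = ((0 : Fin n → ℝ),
         fun m => (∑ h, Xh' h p.1 * Gam g m i h p.1)
           - fderiv ℝ (Xv' m) p ((0 : Fin n → ℝ), Pi.single i 1)) := by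
  unfold lie
  have hc : fderiv ℝ (XV (n := n) i) p = 0 := by
    have e : (XV (n := n) i) = fun _ : Pt n => (((0 : Fin n → ℝ), Pi.single i (1:ℝ)) : Pt n) :=
      rfl
    rw [e]; exact fderiv_const_apply _
  have hXvp : XV (n := n) i p = ((0 : Fin n → ℝ), Pi.single i 1) := rfl
  rw [hc, hXvp, fderiv_mkVF_apply hU hg hX hp]
  refine Prod.ext ?_ ?_
  · show (0 : Pt n).1 - _ = _
    funext h'
    simp
  · show (0 : Pt n).2 - _ = _
    funext m
    have := fderiv_X2_vert hU hg hX hp m i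
    simp only [Pi.sub_apply, this]
    show (0 : ℝ) - _ = _
    ring

lemma lieDer_vv (a b c : ℝ) (i j : Fin n) :
    lieDer (mkVF g Xh' Xv') (gLift g a b c) (XV i) (XV j) p
      = c * fderiv ℝ (fun z => g z i j) p.1 (fun h' => Xh' h' p.1)
        - c * ∑ m, g p.1 m j * ((∑ h, Xh' h p.1 * Gam g m i h p.1)
            - fderiv ℝ (Xv' m) p ((0 : Fin n → ℝ), Pi.single i 1))
        - c * ∑ m, g p.1 i m * ((∑ h, Xh' h p.1 * Gam g m j h p.1)
            - fderiv ℝ (Xv' m) p ((0 : Fin n → ℝ), Pi.single j 1)) := by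
  unfold lieDer dirD
  have e1 : (fun q => gLift g a b c q (XV i q) (XV j q)) = fun q : Pt n => c * g q.1 i j :=
    funext fun q => gLift_XV_XV g a b c q i j
  have hgd : DifferentiableAt ℝ (fun z => g z i j) p.1 := diffAt_of_mem hU (hg.1 i j) hp
  have e2 : fderiv ℝ (fun q : Pt n => c * g q.1 i j) p (mkVF g Xh' Xv' p)
      = c * fderiv ℝ (fun z => g z i j) p.1 (fun h' => Xh' h' p.1) := by
    have hh := (hasFDerivAt_comp_fst (F := fun z => g z i j) hgd).const_mul c
    rw [hh.fderiv]
    have hfst : (mkVF g Xh' Xv' p).1 = fun h' => Xh' h' p.1 := by rw [mkVF_eq]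
    simp only [ContinuousLinearMap.smul_apply, ContinuousLinearMap.coe_comp',
      Function.comp_apply, ContinuousLinearMap.coe_fst', smul_eq_mul, hfst]
  rw [e1, e2, lie_XV hU hg hX hp i, lie_XV hU hg hX hp j,
    gLift_vert_XV, gLift_XV_vert]

end Derivs2


section Derivs3

variable {U : Set (Fin n → ℝ)} (hU : IsOpen U)
  {g : (Fin n → ℝ) → Matrix (Fin n) (Fin n) ℝ} (hg : IsMetric U g)
  {Xh' : Fin n → (Fin n → ℝ) → ℝ} {Xv' : Fin n → Pt n → ℝ}
  (hX : SmoothComponents U Xh' Xv') {p : Pt n} (hp : p.1 ∈ U)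

include hU hg

lemma contDiffOn_XH (j : Fin n) :
    ContDiffOn ℝ (⊤ : ℕ∞) (XH g j) (U ×ˢ (Set.univ : Set (Fin n → ℝ))) := by
  have eXH : XH g j = fun q : Pt n =>
      (((Pi.single j 1 : Fin n → ℝ)),
        ((fun m => -(∑ a, q.2 a * Gam g m a j q.1)) : Fin n → ℝ)) := by
    funext q
    refine Prod.ext rfl ?_
    funext m
    show -∑ a, q.2 a * Gam g m a j q.1 = _
    ring
  rw [eXH]
  apply ContDiffOn.prodMk contDiffOn_const
  apply contDiffOn_pi.2
  intro m
  apply ContDiffOn.neg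
  apply ContDiffOn.sum
  intro a' _
  refine ContDiffOn.mul ?_ ?_
  · exact (((ContinuousLinearMap.proj (R := ℝ) (φ := fun _ : Fin n => ℝ) a').comp
      (ContinuousLinearMap.snd ℝ (Fin n → ℝ) (Fin n → ℝ))).contDiff).contDiffOn
  · exact (contDiffOn_Gam hU hg m a' j).comp contDiff_fst.contDiffOn fun q hq =>
      (Set.mem_prod.1 hq).1

include hX hp

lemma lie_XH_fst (j : Fin n) :
    (lie (mkVF g Xh' Xv') (XH g j) p).1
      = fun h' => -(fderiv ℝ (Xh' h') p.1 (Pi.single j 1)) := by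
  unfold lie
  have eXH : XH g j = fun q : Pt n =>
      ((fun _q : Pt n => (Pi.single j 1 : Fin n → ℝ)) q,
        (fun q' : Pt n => (fun m => -∑ a, q'.2 a * Gam g m a j q'.1 : Fin n → ℝ)) q) := by
    funext q; rfl
  have hF2d : ∀ m, DifferentiableAt ℝ
      (fun q : Pt n => -(∑ a, q.2 a * Gam g m a j q.1)) p := by
    intro m
    have hmain := HasFDerivAt.fun_neg (HasFDerivAt.fun_sum (u := Finset.univ) (fun a _ =>
      HasFDerivAt.fun_mul (hasFDerivAt_snd_apply a p)
        (hasFDerivAt_comp_fst (diffAt_of_mem hU (contDiffOn_Gam hU hg m a j) hp))))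
    exact hmain.differentiableAt
  have hA : (fderiv ℝ (XH g j) p (mkVF g Xh' Xv' p)).1 = 0 := by
    rw [eXH]
    rw [fderiv_prod_pi_apply (F1 := fun _q : Pt n => (Pi.single j 1 : Fin n → ℝ))
        (F2 := fun q' : Pt n => (fun m => -∑ a, q'.2 a * Gam g m a j q'.1 : Fin n → ℝ))
        (mkVF g Xh' Xv' p) (fun i => differentiableAt_const _) hF2d]
    funext i
    simp
  have hB : (fderiv ℝ (mkVF g Xh' Xv') p (XH g j p)).1
      = fun h' => fderiv ℝ (Xh' h') p.1 (Pi.single j 1) := by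
    rw [fderiv_mkVF_apply hU hg hX hp (XH g j p)]
    rfl
  rw [Prod.fst_sub, hA, hB]
  funext h'
  simp

lemma lieDer_vh (a b : ℝ) (i j : Fin n) :
    lieDer (mkVF g Xh' Xv') (gLift g a b 0) (XV i) (XH g j) p
      = b * fderiv ℝ (fun z => g z j i) p.1 (fun h' => Xh' h' p.1)
        - b * ∑ m, g p.1 j m * ((∑ h, Xh' h p.1 * Gam g m i h p.1)
            - fderiv ℝ (Xv' m) p ((0 : Fin n → ℝ), Pi.single i 1))
        - b * ∑ m, g p.1 m i * (-(fderiv ℝ (Xh' m) p.1 (Pi.single j 1))) := by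
  unfold lieDer dirD
  have e1 : (fun q => gLift g a b 0 q (XV i q) (XH g j q)) = fun q : Pt n => b * g q.1 j i :=
    funext fun q => gLift_XV_XH g a b q i j
  have hgd : DifferentiableAt ℝ (fun z => g z j i) p.1 := diffAt_of_mem hU (hg.1 j i) hp
  have e2 : fderiv ℝ (fun q : Pt n => b * g q.1 j i) p (mkVF g Xh' Xv' p)
      = b * fderiv ℝ (fun z => g z j i) p.1 (fun h' => Xh' h' p.1) := by
    have hh := (hasFDerivAt_comp_fst (F := fun z => g z j i) hgd).const_mul b
    rw [hh.fderiv]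
    have hfst : (mkVF g Xh' Xv' p).1 = fun h' => Xh' h' p.1 := by rw [mkVF_eq]
    simp only [ContinuousLinearMap.smul_apply, ContinuousLinearMap.coe_comp',
      Function.comp_apply, ContinuousLinearMap.coe_fst', smul_eq_mul, hfst]
  have e3 : gLift g a b 0 p (XV i p) (lie (mkVF g Xh' Xv') (XH g j) p)
      = b * ∑ m, g p.1 m i * (-(fderiv ℝ (Xh' m) p.1 (Pi.single j 1))) := by
    rw [gLift_XV_any, lie_XH_fst hU hg hX hp j]
  rw [e1, e2, lie_XV hU hg hX hp i, gLift_vert_XH, e3]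

end Derivs3


section Analysis

variable {U : Set (Fin n → ℝ)} (hU : IsOpen U)
  {g : (Fin n → ℝ) → Matrix (Fin n) (Fin n) ℝ} (hg : IsMetric U g)
  {Xh' : Fin n → (Fin n → ℝ) → ℝ} {Xv' : Fin n → Pt n → ℝ}
  (hX : SmoothComponents U Xh' Xv')

lemma contDiffOn_XV (i : Fin n) :
    ContDiffOn ℝ (⊤ : ℕ∞) (XV (n := n) i) (U ×ˢ (Set.univ : Set (Fin n → ℝ))) := by
  have e : XV (n := n) i
      = fun _ : Pt n => (((0 : Fin n → ℝ), Pi.single i (1 : ℝ)) : Pt n) := rfl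
  rw [e]; exact contDiffOn_const

include hU hX

lemma contDiffOn_DXv (m i : Fin n) :
    ContDiffOn ℝ (⊤ : ℕ∞) (fun q => fderiv ℝ (Xv' m) q ((0 : Fin n → ℝ), Pi.single i 1))
      (U ×ˢ (Set.univ : Set (Fin n → ℝ))) :=
  (((hX.2 m).fderiv_of_isOpen (hU.prod isOpen_univ) (by simp)).clm_apply contDiffOn_const)

lemma sym_T (m : Fin n) {p : Pt n} (hp : p.1 ∈ U) (v w : Pt n) :
    fderiv ℝ (fun q => fderiv ℝ (Xv' m) q v) p w
      = fderiv ℝ (fun q => fderiv ℝ (Xv' m) q w) p v := by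
  have hmem : p ∈ U ×ˢ (Set.univ : Set (Fin n → ℝ)) := mem_prod_univ hp
  have hopen : IsOpen (U ×ˢ (Set.univ : Set (Fin n → ℝ))) := hU.prod isOpen_univ
  have hf2 : ContDiffAt ℝ 2 (Xv' m) p :=
    ((hX.2 m).contDiffAt (hopen.mem_nhds hmem)).of_le (WithTop.coe_le_coe.2 le_top)
  have hsym := hf2.isSymmSndFDerivAt (by simp)
  have hd : DifferentiableAt ℝ (fderiv ℝ (Xv' m)) p :=
    ((((hX.2 m).fderiv_of_isOpen (m := 1) hopen (WithTop.coe_le_coe.2 le_top)).contDiffAt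
      (hopen.mem_nhds hmem)).differentiableAt (by simp))
  rw [fderiv_clm_apply hd (differentiableAt_const v),
    fderiv_clm_apply hd (differentiableAt_const w)]
  simp only [fderiv_const_apply, ContinuousLinearMap.add_apply, ContinuousLinearMap.coe_comp',
    Function.comp_apply, Pi.zero_apply, ContinuousLinearMap.zero_apply, map_zero,
    ContinuousLinearMap.flip_apply, zero_add]
  exact hsym.eq w v

omit hU hX in
lemma slice_hasFDerivAt {f : Pt n → ℝ} {x : Fin n → ℝ} {y : Fin n → ℝ}
    (hf : DifferentiableAt ℝ f ((x, y) : Pt n)) :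
    HasFDerivAt (fun y' : Fin n → ℝ => f (x, y'))
      ((fderiv ℝ f (x, y)).comp (ContinuousLinearMap.inr ℝ (Fin n → ℝ) (Fin n → ℝ))) y :=
  hf.hasFDerivAt.comp y (hasFDerivAt_prodMk_right x y)

lemma T_zero_of_const2 (c1 c2 : Fin n → ℝ) (i j : Fin n) {x : Fin n → ℝ} (hx : x ∈ U)
    (hconst : ∀ y y' : Fin n → ℝ,
      (∑ m, c1 m * fderiv ℝ (Xv' m) ((x, y) : Pt n) ((0 : Fin n → ℝ), Pi.single i 1))
        + (∑ m, c2 m * fderiv ℝ (Xv' m) ((x, y) : Pt n) ((0 : Fin n → ℝ), Pi.single j 1))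
      = (∑ m, c1 m * fderiv ℝ (Xv' m) ((x, y') : Pt n) ((0 : Fin n → ℝ), Pi.single i 1))
        + (∑ m, c2 m * fderiv ℝ (Xv' m) ((x, y') : Pt n) ((0 : Fin n → ℝ), Pi.single j 1)))
    (y : Fin n → ℝ) (k : Fin n) :
    (∑ m, c1 m * fderiv ℝ (fun q => fderiv ℝ (Xv' m) q ((0 : Fin n → ℝ), Pi.single i 1))
        ((x, y) : Pt n) ((0 : Fin n → ℝ), Pi.single k 1))
      + (∑ m, c2 m * fderiv ℝ (fun q => fderiv ℝ (Xv' m) q ((0 : Fin n → ℝ), Pi.single j 1))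
        ((x, y) : Pt n) ((0 : Fin n → ℝ), Pi.single k 1)) = 0 := by
  set Φ : (Fin n → ℝ) → ℝ := fun y' =>
    (∑ m, c1 m * fderiv ℝ (Xv' m) ((x, y') : Pt n) ((0 : Fin n → ℝ), Pi.single i 1))
      + (∑ m, c2 m * fderiv ℝ (Xv' m) ((x, y') : Pt n) ((0 : Fin n → ℝ), Pi.single j 1))
    with hΦ
  have hDd : ∀ (m : Fin n) (w : Pt n),
      DifferentiableAt ℝ (fun q => fderiv ℝ (Xv' m) q w) ((x, y) : Pt n) := by
    intro m w
    exact diffAt_of_mem_prod hU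
      (((hX.2 m).fderiv_of_isOpen (hU.prod isOpen_univ) (by simp)).clm_apply contDiffOn_const)
      (by exact hx)
  have hval : HasFDerivAt Φ
      ((∑ m, c1 m • ((fderiv ℝ (fun q => fderiv ℝ (Xv' m) q
            ((0 : Fin n → ℝ), Pi.single i 1)) ((x, y) : Pt n)).comp
            (ContinuousLinearMap.inr ℝ (Fin n → ℝ) (Fin n → ℝ))))
        + ∑ m, c2 m • ((fderiv ℝ (fun q => fderiv ℝ (Xv' m) q
            ((0 : Fin n → ℝ), Pi.single j 1)) ((x, y) : Pt n)).comp
            (ContinuousLinearMap.inr ℝ (Fin n → ℝ) (Fin n → ℝ)))) y := by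
    apply HasFDerivAt.add
    · exact HasFDerivAt.fun_sum (u := Finset.univ) fun m _ =>
        (slice_hasFDerivAt (hDd m _)).const_mul (c1 m)
    · exact HasFDerivAt.fun_sum (u := Finset.univ) fun m _ =>
        (slice_hasFDerivAt (hDd m _)).const_mul (c2 m)
  have h0 : fderiv ℝ Φ y = 0 := by
    have e : Φ = fun _ => Φ 0 := funext fun y' => hconst y' 0
    rw [e]; exact fderiv_const_apply _
  have := hval.fderiv
  rw [h0] at this
  have happ := congrFun (congrArg (fun (L : (Fin n → ℝ) →L[ℝ] ℝ) => (L : (Fin n → ℝ) → ℝ))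
    this) (Pi.single k 1)
  simp only [ContinuousLinearMap.zero_apply, ContinuousLinearMap.add_apply,
    ContinuousLinearMap.coe_sum', Finset.sum_apply, ContinuousLinearMap.smul_apply,
    ContinuousLinearMap.coe_comp', Function.comp_apply, ContinuousLinearMap.inr_apply,
    smul_eq_mul, Pi.zero_apply] at happ
  exact happ.symm


lemma T_zero_of_const1 (c1 : Fin n → ℝ) (i : Fin n) {x : Fin n → ℝ} (hx : x ∈ U)
    (hconst : ∀ y y' : Fin n → ℝ,
      (∑ m, c1 m * fderiv ℝ (Xv' m) ((x, y) : Pt n) ((0 : Fin n → ℝ), Pi.single i 1))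
      = (∑ m, c1 m * fderiv ℝ (Xv' m) ((x, y') : Pt n) ((0 : Fin n → ℝ), Pi.single i 1)))
    (y : Fin n → ℝ) (k : Fin n) :
    (∑ m, c1 m * fderiv ℝ (fun q => fderiv ℝ (Xv' m) q ((0 : Fin n → ℝ), Pi.single i 1))
        ((x, y) : Pt n) ((0 : Fin n → ℝ), Pi.single k 1)) = 0 := by
  have := T_zero_of_const2 hU hX c1 (fun _ => 0) i i hx
    (by intro y1 y2; simpa using hconst y1 y2) y k
  simpa using this

include hg

lemma vanish_of_dot {x : Fin n → ℝ} (hx : x ∈ U) (v : Fin n → ℝ)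
    (hv : ∀ j, ∑ m, g x j m * v m = 0) : ∀ m, v m = 0 := by
  by_contra hcon
  push_neg at hcon
  obtain ⟨m0, hm0⟩ := hcon
  have hvne : v ≠ 0 := fun h0 => hm0 (by rw [h0]; rfl)
  have hpd := hg.2.2 x hx
  have hpos := hpd.dotProduct_mulVec_pos hvne
  have hmv : Matrix.mulVec (g x) v = 0 := by
    funext j
    simpa [Matrix.mulVec, dotProduct] using hv j
  rw [hmv] at hpos
  simp at hpos

end Analysis


section Extract

variable {U : Set (Fin n → ℝ)} (hU : IsOpen U)
  {g : (Fin n → ℝ) → Matrix (Fin n) (Fin n) ℝ} (hg : IsMetric U g)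
  {Xh' : Fin n → (Fin n → ℝ) → ℝ} {Xv' : Fin n → Pt n → ℝ}
  (hX : SmoothComponents U Xh' Xv') {Ω : Pt n → ℝ}
  (hiness : ∀ p q : Pt n, p.1 = q.1 → Ω p = Ω q)

include hU hg hX hiness

lemma const_c {a b c : ℝ} (hc : c ≠ 0)
    (hconf : Conformal U g a b c (mkVF g Xh' Xv') Ω) (i j : Fin n) {p q : Pt n}
    (hp : p.1 ∈ U) (hq1 : q.1 = p.1) :
    (∑ m, g p.1 m j * fderiv ℝ (Xv' m) p ((0 : Fin n → ℝ), Pi.single i 1))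
      + (∑ m, g p.1 m i * fderiv ℝ (Xv' m) p ((0 : Fin n → ℝ), Pi.single j 1))
    = (∑ m, g p.1 m j * fderiv ℝ (Xv' m) q ((0 : Fin n → ℝ), Pi.single i 1))
      + (∑ m, g p.1 m i * fderiv ℝ (Xv' m) q ((0 : Fin n → ℝ), Pi.single j 1)) := by
  have hq : q.1 ∈ U := by rw [hq1]; exact hp
  have e1 := hconf (XV i) (XV j) (contDiffOn_XV i) (contDiffOn_XV j) p hp
  have e2 := hconf (XV i) (XV j) (contDiffOn_XV i) (contDiffOn_XV j) q hq
  rw [lieDer_vv hU hg hX hp a b c i j, gLift_XV_XV] at e1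
  rw [lieDer_vv hU hg hX hq a b c i j, gLift_XV_XV, hq1, hiness q p hq1] at e2
  have hsym : ∀ m, g p.1 i m = g p.1 m i := fun m => (hg.2.1 p.1 hp).apply m i
  simp only [hsym] at e1 e2
  simp only [mul_sub, Finset.sum_sub_distrib] at e1 e2
  apply mul_left_cancel₀ hc
  linear_combination e1 - e2

lemma const_b {a b : ℝ} (hb : b ≠ 0)
    (hconf : Conformal U g a b 0 (mkVF g Xh' Xv') Ω) (i j : Fin n) {p q : Pt n}
    (hp : p.1 ∈ U) (hq1 : q.1 = p.1) :
    (∑ m, g p.1 j m * fderiv ℝ (Xv' m) p ((0 : Fin n → ℝ), Pi.single i 1))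
    = (∑ m, g p.1 j m * fderiv ℝ (Xv' m) q ((0 : Fin n → ℝ), Pi.single i 1)) := by
  have hq : q.1 ∈ U := by rw [hq1]; exact hp
  have e1 := hconf (XV i) (XH g j) (contDiffOn_XV i) (contDiffOn_XH hU hg j) p hp
  have e2 := hconf (XV i) (XH g j) (contDiffOn_XV i) (contDiffOn_XH hU hg j) q hq
  rw [lieDer_vh hU hg hX hp a b i j, gLift_XV_XH] at e1
  rw [lieDer_vh hU hg hX hq a b i j, gLift_XV_XH, hq1, hiness q p hq1] at e2
  simp only [mul_sub, Finset.sum_sub_distrib] at e1 e2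
  apply mul_left_cancel₀ hb
  linear_combination e1 - e2

lemma T_vanish {a b c : ℝ} (habc : a * c - b ^ 2 ≠ 0)
    (hconf : Conformal U g a b c (mkVF g Xh' Xv') Ω) :
    ∀ (m i k : Fin n) (p : Pt n), p.1 ∈ U →
      fderiv ℝ (fun q => fderiv ℝ (Xv' m) q ((0 : Fin n → ℝ), Pi.single i 1)) p
        ((0 : Fin n → ℝ), Pi.single k 1) = 0 := by
  intro m i k p hp
  have hpe : p = ((p.1, p.2) : Pt n) := rfl
  rw [hpe]
  set x := p.1 with hx'
  set y := p.2
  have hx : x ∈ U := hp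
  by_cases hc : c = 0
  · subst hc
    have hb : b ≠ 0 := by
      intro hb0; apply habc; rw [hb0]; ring
    have hv : ∀ j, ∑ m', g x j m' *
        (fun m' => fderiv ℝ (fun q => fderiv ℝ (Xv' m') q ((0 : Fin n → ℝ), Pi.single i 1))
          ((x, y) : Pt n) ((0 : Fin n → ℝ), Pi.single k 1)) m' = 0 := by
      intro j
      exact T_zero_of_const1 hU hX (fun m' => g x j m') i hx
        (fun y1 y2 => const_b hU hg hX hiness hb hconf i j
          (p := ((x, y1) : Pt n)) (q := ((x, y2) : Pt n)) hx rfl) y k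
    exact vanish_of_dot hU hg hX hx _ hv m
  · have eqn : ∀ (i' j' k' : Fin n),
        (∑ m', g x m' j' * fderiv ℝ (fun q => fderiv ℝ (Xv' m') q
            ((0 : Fin n → ℝ), Pi.single i' 1)) ((x, y) : Pt n)
            ((0 : Fin n → ℝ), Pi.single k' 1))
        + (∑ m', g x m' i' * fderiv ℝ (fun q => fderiv ℝ (Xv' m') q
            ((0 : Fin n → ℝ), Pi.single j' 1)) ((x, y) : Pt n)
            ((0 : Fin n → ℝ), Pi.single k' 1)) = 0 := by
      intro i' j' k'
      exact T_zero_of_const2 hU hX (fun m' => g x m' j') (fun m' => g x m' i') i' j' hx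
        (fun y1 y2 => const_c hU hg hX hiness hc hconf i' j'
          (p := ((x, y1) : Pt n)) (q := ((x, y2) : Pt n)) hx rfl) y k'
    have hsymT : ∀ (m' k' i' : Fin n),
        fderiv ℝ (fun q => fderiv ℝ (Xv' m') q ((0 : Fin n → ℝ), Pi.single i' 1))
          ((x, y) : Pt n) ((0 : Fin n → ℝ), Pi.single k' 1)
        = fderiv ℝ (fun q => fderiv ℝ (Xv' m') q ((0 : Fin n → ℝ), Pi.single k' 1))
          ((x, y) : Pt n) ((0 : Fin n → ℝ), Pi.single i' 1) :=
      fun m' k' i' => sym_T hU hX m' (show ((x, y) : Pt n).1 ∈ U from hx) _ _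
    have hsymS : ∀ (A B C : Fin n),
        (∑ m', g x m' A * fderiv ℝ (fun q => fderiv ℝ (Xv' m') q
            ((0 : Fin n → ℝ), Pi.single C 1)) ((x, y) : Pt n)
            ((0 : Fin n → ℝ), Pi.single B 1))
        = (∑ m', g x m' A * fderiv ℝ (fun q => fderiv ℝ (Xv' m') q
            ((0 : Fin n → ℝ), Pi.single B 1)) ((x, y) : Pt n)
            ((0 : Fin n → ℝ), Pi.single C 1)) :=
      fun A B C => Finset.sum_congr rfl fun m' _ => by rw [hsymT m' B C]
    have hS0 : ∀ (j' k' i' : Fin n),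
        (∑ m', g x m' j' * fderiv ℝ (fun q => fderiv ℝ (Xv' m') q
            ((0 : Fin n → ℝ), Pi.single i' 1)) ((x, y) : Pt n)
            ((0 : Fin n → ℝ), Pi.single k' 1)) = 0 := by
      intro j' k' i'
      linarith [eqn i' j' k', eqn j' k' i', eqn k' i' j',
        hsymS j' k' i', hsymS i' k' j', hsymS k' i' j']
    have hv : ∀ j, ∑ m', g x j m' *
        (fun m' => fderiv ℝ (fun q => fderiv ℝ (Xv' m') q ((0 : Fin n → ℝ), Pi.single i 1))
          ((x, y) : Pt n) ((0 : Fin n → ℝ), Pi.single k 1)) m' = 0 := by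
      intro j
      have := hS0 j k i
      rw [Finset.sum_congr rfl fun m' _ => by rw [(hg.2.1 x hx).apply j m']] at this
      exact this
    exact vanish_of_dot hU hg hX hx _ hv m

end Extract


section Affine

variable {U : Set (Fin n → ℝ)} (hU : IsOpen U)
  {Xh' : Fin n → (Fin n → ℝ) → ℝ} {Xv' : Fin n → Pt n → ℝ}
  (hX : SmoothComponents U Xh' Xv')

omit hU hX in
lemma pair_decomp (v : Fin n → ℝ) :
    (((0 : Fin n → ℝ), v) : Pt n) = ∑ k, v k • (((0 : Fin n → ℝ), Pi.single k 1) : Pt n) := by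
  refine Prod.ext ?_ ?_
  · rw [Prod.fst_sum]; simp
  · rw [Prod.snd_sum]
    funext l
    simp [Pi.single_apply, mul_ite, Finset.sum_ite_eq, Finset.sum_ite_eq']

include hU hX

lemma slice_D_const (m i : Fin n) {x : Fin n → ℝ} (hx : x ∈ U) (y y' : Fin n → ℝ)
    (hT : ∀ (m i k : Fin n) (p : Pt n), p.1 ∈ U →
      fderiv ℝ (fun q => fderiv ℝ (Xv' m) q ((0 : Fin n → ℝ), Pi.single i 1)) p
        ((0 : Fin n → ℝ), Pi.single k 1) = 0) :
    fderiv ℝ (Xv' m) ((x, y) : Pt n) ((0 : Fin n → ℝ), Pi.single i 1)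
      = fderiv ℝ (Xv' m) ((x, y') : Pt n) ((0 : Fin n → ℝ), Pi.single i 1) := by
  set G : (Fin n → ℝ) → ℝ :=
    fun y0 => fderiv ℝ (Xv' m) ((x, y0) : Pt n) ((0 : Fin n → ℝ), Pi.single i 1) with hG
  have hHd : ∀ y0 : Fin n → ℝ, DifferentiableAt ℝ
      (fun q => fderiv ℝ (Xv' m) q ((0 : Fin n → ℝ), Pi.single i 1)) ((x, y0) : Pt n) :=
    fun y0 => diffAt_of_mem_prod hU (contDiffOn_DXv hU hX m i) (by exact hx)
  have hGd : ∀ y0, HasFDerivAt G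
      ((fderiv ℝ (fun q => fderiv ℝ (Xv' m) q ((0 : Fin n → ℝ), Pi.single i 1))
          ((x, y0) : Pt n)).comp (ContinuousLinearMap.inr ℝ (Fin n → ℝ) (Fin n → ℝ))) y0 :=
    fun y0 => slice_hasFDerivAt (hHd y0)
  have hzero : ∀ y0, fderiv ℝ G y0 = 0 := by
    intro y0
    rw [(hGd y0).fderiv]
    refine ContinuousLinearMap.ext fun v => ?_
    simp only [ContinuousLinearMap.coe_comp', Function.comp_apply,
      ContinuousLinearMap.inr_apply, ContinuousLinearMap.zero_apply]
    rw [pair_decomp v, map_sum]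
    refine Finset.sum_eq_zero fun k _ => ?_
    rw [map_smul]
    rw [hT m i k ((x, y0) : Pt n) (by exact hx)]
    simp
  exact is_const_of_fderiv_eq_zero (fun y0 => (hGd y0).differentiableAt) hzero y y'

lemma affine_repr {x : Fin n → ℝ} (hx : x ∈ U) (y : Fin n → ℝ) (m : Fin n)
    (hT : ∀ (m i k : Fin n) (p : Pt n), p.1 ∈ U →
      fderiv ℝ (fun q => fderiv ℝ (Xv' m) q ((0 : Fin n → ℝ), Pi.single i 1)) p
        ((0 : Fin n → ℝ), Pi.single k 1) = 0) :
    Xv' m ((x, y) : Pt n)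
      = (∑ a, (fderiv ℝ (Xv' m) ((x, (0 : Fin n → ℝ)) : Pt n)
            ((0 : Fin n → ℝ), Pi.single a 1)) * y a)
        + Xv' m ((x, (0 : Fin n → ℝ)) : Pt n) := by
  set al : Fin n → ℝ := fun a => fderiv ℝ (Xv' m) ((x, (0 : Fin n → ℝ)) : Pt n)
    ((0 : Fin n → ℝ), Pi.single a 1) with hal
  set F : (Fin n → ℝ) → ℝ := fun y0 => Xv' m ((x, y0) : Pt n) - ∑ a, al a * y0 a with hF
  have hXd : ∀ y0 : Fin n → ℝ, DifferentiableAt ℝ (Xv' m) ((x, y0) : Pt n) :=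
    fun y0 => diffAt_of_mem_prod hU (hX.2 m) (by exact hx)
  have hFd : ∀ y0, HasFDerivAt F
      (((fderiv ℝ (Xv' m) ((x, y0) : Pt n)).comp
          (ContinuousLinearMap.inr ℝ (Fin n → ℝ) (Fin n → ℝ)))
        - ∑ a, al a • (ContinuousLinearMap.proj (R := ℝ) (φ := fun _ : Fin n => ℝ) a)) y0 := by
    intro y0
    apply HasFDerivAt.sub
    · exact slice_hasFDerivAt (hXd y0)
    · exact HasFDerivAt.fun_sum (u := Finset.univ) fun a _ =>
        (ContinuousLinearMap.proj (R := ℝ) (φ := fun _ : Fin n => ℝ) a).hasFDerivAt.const_mul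
          (al a)
  have hzero : ∀ y0, fderiv ℝ F y0 = 0 := by
    intro y0
    rw [(hFd y0).fderiv]
    refine ContinuousLinearMap.ext fun v => ?_
    simp only [ContinuousLinearMap.sub_apply, ContinuousLinearMap.coe_comp',
      Function.comp_apply, ContinuousLinearMap.inr_apply, ContinuousLinearMap.coe_sum',
      Finset.sum_apply, ContinuousLinearMap.smul_apply, ContinuousLinearMap.proj_apply,
      smul_eq_mul, ContinuousLinearMap.zero_apply]
    rw [pair_decomp v, map_sum]
    rw [Finset.sum_congr rfl fun k _ => by
      rw [map_smul, smul_eq_mul,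
        show fderiv ℝ (Xv' m) ((x, y0) : Pt n) ((0 : Fin n → ℝ), Pi.single k 1) = al k from
          slice_D_const hU hX m k hx y0 (0 : Fin n → ℝ) hT]]
    simp [mul_comm]
  have := is_const_of_fderiv_eq_zero (fun y0 => (hFd y0).differentiableAt) hzero y
    (0 : Fin n → ℝ)
  simp only [hF] at this
  have h0 : ∑ a, al a * (0 : Fin n → ℝ) a = 0 := by simp
  rw [h0] at this
  linarith [this]

end Affine

/-- If a fiber-preserving vector field `X` on `TU` is conformal for
`g̃ = a g₁ + b g₂ + c g₃` (with `a·c − b² ≠ 0`) with factor `Ω` depending only on the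
position variables (`X` inessential), then `∂²X^m̄/∂y^i∂y^j = 0` for all `m, i, j`;
equivalently, `X^m̄(x,y) = Σ_a α^m_a(x) y^a + β^m(x)` for smooth functions `α, β` on `U`. -/
theorem inessential_vertical_components_affine (n : ℕ) (hn : 1 ≤ n) (U : Set (Fin n → ℝ))
    (hU : IsOpen U) (g : (Fin n → ℝ) → Matrix (Fin n) (Fin n) ℝ) (hg : IsMetric U g)
    (a b c : ℝ) (habc : a * c - b ^ 2 ≠ 0)
    (Xh' : Fin n → (Fin n → ℝ) → ℝ) (Xv' : Fin n → Pt n → ℝ)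
    (hX : SmoothComponents U Xh' Xv')
    (Ω : Pt n → ℝ) (hΩ : ContDiffOn ℝ (⊤ : ℕ∞) Ω (U ×ˢ Set.univ))
    (hiness : ∀ p q : Pt n, p.1 = q.1 → Ω p = Ω q)
    (hconf : Conformal U g a b c (mkVF g Xh' Xv') Ω) :
    (∀ m i j : Fin n, ∀ p : Pt n, p.1 ∈ U →
        dirD (XV i) (fun q => dirD (XV j) (Xv' m) q) p = 0) ∧
      ∃ α : Fin n → Fin n → (Fin n → ℝ) → ℝ, ∃ β : Fin n → (Fin n → ℝ) → ℝ,
        (∀ m a', ContDiffOn ℝ (⊤ : ℕ∞) (α m a') U) ∧ (∀ m, ContDiffOn ℝ (⊤ : ℕ∞) (β m) U) ∧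
          ∀ m : Fin n, ∀ p : Pt n, p.1 ∈ U →
            Xv' m p = (∑ a', α m a' p.1 * p.2 a') + β m p.1 := by
  have hT := T_vanish hU hg hX hiness habc hconf
  constructor
  · intro m i j p hp
    have h := hT m j i p hp
    simp only [dirD, XV]
    exact h
  · refine ⟨fun m a' x => fderiv ℝ (Xv' m) ((x, (0 : Fin n → ℝ)) : Pt n)
        ((0 : Fin n → ℝ), Pi.single a' 1),
      fun m x => Xv' m ((x, (0 : Fin n → ℝ)) : Pt n), ?_, ?_, ?_⟩
    · intro m a'
      exact (contDiffOn_DXv hU hX m a').comp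
        ((contDiff_id.prodMk contDiff_const).contDiffOn)
        (fun x hx => mem_prod_univ (by exact hx))
    · intro m
      exact (hX.2 m).comp ((contDiff_id.prodMk contDiff_const).contDiffOn)
        (fun x hx => mem_prod_univ (by exact hx))
    · intro m p hp
      have h := affine_repr hU hX (x := p.1) hp p.2 m hT
      simpa using h

end TangentLift
end
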